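/- arXiv:2503.13801 — 5 statements merged into one kernel-verified Lean document; each statement's English description precedes it below -/
import Mathlib

section
/- Let (Z, 𝒜) be a measurable space, μ a probability measure on Z, T : Z → ℝ a measurable function, n ≥ 1, and α ∈ ℝ with 1/(n+1) ≤ α ≤ 1. For z = (z₁, …, z_{n+1}) ∈ Z^{n+1} define λ̂(z₁, …, z_n) = sInf{λ ∈ ℝ : |{i ∈ {1, …, n} : λ < T(z_i)}| ≤ α·n + α − 1}. Then, under the product measure μ^{⊗(n+1)} on Z^{n+1}, the probability of the event {z : λ̂(z₁, …, z_n) < T(z_{n+1})} is at most α. -/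
/-!
If `λ̂ < T(z_{n+1})`, the calibration scores above `λ̂` number at most `α(n+1) - 1`, so at most
`m = ⌊α(n+1)⌋` of all `n+1` scores are `≥ T(z_{n+1})`: the test score has rank at most `m`
counted from the top. In any finite list at most `m` entries have rank `≤ m`, since already the
smallest of them has all the others above it. The samples are i.i.d., hence exchangeable, so every
position has the same probability of rank `≤ m`, and `(n+1) P ≤ m ≤ α(n+1)`.
-/

open MeasureTheory Finset
open scoped ENNReal

section Rank

variable {ι β : Type*} [Fintype ι] [LinearOrder β]

def upperRank (v : ι → β) (j : ι) : ℕ := #{i | v j ≤ v i}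

theorem card_filter_upperRank_le (v : ι → β) (m : ℕ) : #{j | upperRank v j ≤ m} ≤ m := by
  set B : Finset ι := {j | upperRank v j ≤ m}
  rcases B.eq_empty_or_nonempty with hB | hB
  · simp [hB]
  obtain ⟨j₀, hj₀, hmin⟩ := B.exists_min_image v hB
  calc #B ≤ upperRank v j₀ := card_le_card fun j hj => mem_filter.2 ⟨mem_univ _, hmin j hj⟩
    _ ≤ m := (mem_filter.1 hj₀).2

theorem upperRank_comp_perm (v : ι → β) (σ : Equiv.Perm ι) (j : ι) :
    upperRank (v ∘ σ) j = upperRank v (σ j) := by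
  simp only [upperRank, card_filter, Function.comp_apply]
  exact Equiv.sum_comp σ fun i => if v (σ j) ≤ v i then 1 else 0

theorem upperRank_last {n : ℕ} (v : Fin (n + 1) → β) :
    upperRank v (Fin.last n) = #{i : Fin n | v (Fin.last n) ≤ v i.castSucc} + 1 := by
  simp only [upperRank, card_filter, Fin.sum_univ_castSucc, le_refl, if_true]

end Rank

section Threshold

variable {ι : Type*} [Fintype ι]

noncomputable def crcThreshold (v : ι → ℝ) (k : ℝ) : ℝ := sInf {lam | (#{i | lam < v i} : ℝ) ≤ k}

/-- The bounds on `k` make the set defining the threshold nonempty and bounded below, so that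
`sInf` is not the junk value `0`. -/
theorem card_le_of_crcThreshold_lt {v : ι → ℝ} {k t : ℝ} (hk₀ : 0 ≤ k)
    (hk : k < Fintype.card ι) (ht : crcThreshold v k < t) : (#{i | t ≤ v i} : ℝ) ≤ k := by
  set S := {lam : ℝ | (#{i | lam < v i} : ℝ) ≤ k}
  have hS : S.Nonempty := by
    obtain ⟨M, hM⟩ := (Set.finite_range v).bddAbove
    have : ({i | M < v i} : Finset ι) = ∅ :=
      filter_eq_empty_iff.2 fun i _ => not_lt.2 (hM ⟨i, rfl⟩)
    exact ⟨M, by simpa [S, this] using hk₀⟩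
  have hS' : BddBelow S := by
    obtain ⟨L, hL⟩ := (Set.finite_range v).bddBelow
    refine ⟨L, fun lam hlam => ?_⟩
    by_contra! hlt
    have : ({i | lam < v i} : Finset ι) = univ :=
      filter_eq_self.2 fun i _ => hlt.trans_le (hL ⟨i, rfl⟩)
    simp only [S, Set.mem_ofPred_eq, this, card_univ] at hlam
    linarith
  obtain ⟨lam, hlam, hlt⟩ := (csInf_lt_iff hS' hS).1 ht
  calc (#{i | t ≤ v i} : ℝ) ≤ #{i | lam < v i} :=
        Nat.cast_le.2 <| card_le_card <| monotone_filter_right _ fun _ _ h => hlt.trans_le h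
    _ ≤ k := hlam

end Threshold

section Exchangeable

variable {ι Z : Type*} [Fintype ι] [MeasurableSpace Z] (μ : Measure Z)

theorem measure_pi_preimage_comp_perm [SigmaFinite μ] (σ : Equiv.Perm ι) (s : Set (ι → Z)) :
    Measure.pi (fun _ => μ) ((· ∘ σ) ⁻¹' s) = Measure.pi (fun _ => μ) s := by
  convert (measurePreserving_piCongrLeft (fun _ : ι => μ) σ.symm).measure_preimage_equiv s
    using 3
  ext z i
  simpa using (MeasurableEquiv.piCongrLeft_apply_apply σ.symm (β := fun _ => Z) z (σ i)).symm

theorem measurable_upperRank {T : Z → ℝ} (hT : Measurable T) (j : ι) :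
    Measurable fun z : ι → Z => upperRank (T ∘ z) j := by
  simp only [upperRank, card_filter, Function.comp_apply]
  exact Finset.measurable_sum _ fun i _ => Measurable.ite
    (measurableSet_le (hT.comp (measurable_pi_apply j)) (hT.comp (measurable_pi_apply i)))
    measurable_const measurable_const

theorem card_mul_measure_upperRank_le [IsProbabilityMeasure μ] {T : Z → ℝ} (hT : Measurable T)
    (j : ι) (m : ℕ) :
    Fintype.card ι * Measure.pi (fun _ => μ) {z | upperRank (T ∘ z) j ≤ m} ≤ m := by
  classical
  set π := Measure.pi fun _ : ι => μ
  set A : ι → Set (ι → Z) := fun j => {z | upperRank (T ∘ z) j ≤ m}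
  have hA : ∀ j', π (A j') = π (A j) := fun j' => by
    rw [← measure_pi_preimage_comp_perm μ (Equiv.swap j' j) (A j)]
    congr 1
    ext z
    change _ ↔ upperRank ((T ∘ z) ∘ Equiv.swap j' j) j ≤ m
    rw [upperRank_comp_perm, Equiv.swap_apply_right]
    rfl
  have hmeas : ∀ j', MeasurableSet (A j') := fun j' =>
    measurableSet_le (measurable_upperRank hT j') measurable_const
  calc Fintype.card ι * π (A j) = ∑ j', π (A j') := by simp [hA]
    _ = ∫⁻ z, ∑ j', (A j').indicator 1 z ∂π := by
        rw [lintegral_finsetSum _ fun j' _ => measurable_one.indicator (hmeas j')]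
        simp [lintegral_indicator_one (hmeas _)]
    _ ≤ ∫⁻ _, (m : ℝ≥0∞) ∂π := lintegral_mono fun z => by
        have := card_filter_upperRank_le (T ∘ z) m
        simp only [Set.indicator_apply, Pi.one_apply, A, Set.mem_ofPred_eq]
        rw [← Nat.cast_le (α := ℝ≥0∞), card_filter] at this
        simpa using this
    _ = m := by simp

end Exchangeable

open MeasureTheory Classical in
theorem crc_coverage_iid_general {Z : Type*} [MeasurableSpace Z] (μ : Measure Z)
    [IsProbabilityMeasure μ] (T : Z → ℝ) (hT : Measurable T)
    (n : ℕ) (α : ℝ)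
    (hα1 : 1 / ((n : ℝ) + 1) ≤ α) (hα2 : α ≤ 1) :
    (Measure.pi fun _ : Fin (n + 1) => μ)
      {z : Fin (n + 1) → Z |
        sInf {lam : ℝ |
          ((Finset.univ.filter
            (fun i : Fin n => lam < T (z i.castSucc))).card : ℝ) ≤
            α * n + α - 1}
          < T (z (Fin.last n))} ≤ ENNReal.ofReal α := by
  rcases hα2.eq_or_lt with rfl | hα_lt
  · simpa using prob_le_one
  have hα₀ : 0 < α := lt_of_lt_of_le (by positivity) hα1
  have hk₀ : 0 ≤ α * n + α - 1 := by
    have := (div_le_iff₀ (by positivity : (0 : ℝ) < n + 1)).1 hα1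
    linarith
  have hk : α * n + α - 1 < Fintype.card (Fin n) := by
    rw [Fintype.card_fin]
    nlinarith
  have hsub : {z : Fin (n + 1) → Z | crcThreshold (T ∘ z ∘ Fin.castSucc) (α * n + α - 1)
        < T (z (Fin.last n))} ⊆ {z | upperRank (T ∘ z) (Fin.last n) ≤ ⌊α * (n + 1)⌋₊} := by
    intro z hz
    have := card_le_of_crcThreshold_lt hk₀ hk hz
    refine Nat.le_floor ?_
    rw [upperRank_last]
    simp only [Function.comp_apply] at this ⊢
    push_cast
    linarith
  have hrank := card_mul_measure_upperRank_le μ hT (Fin.last n) ⌊α * (n + 1)⌋₊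
  refine (measure_mono hsub).trans <|
    (ENNReal.mul_le_mul_iff_right (by simp) (ENNReal.natCast_ne_top (n + 1))).1 ?_
  calc ((n + 1 : ℕ) : ℝ≥0∞) * _ ≤ ⌊α * (n + 1)⌋₊ := by simpa using hrank
    _ ≤ ENNReal.ofReal (α * (n + 1)) := by
        rw [← ENNReal.ofReal_natCast]
        exact ENNReal.ofReal_le_ofReal (Nat.floor_le (by positivity))
    _ = ((n + 1 : ℕ) : ℝ≥0∞) * ENNReal.ofReal α := by
        rw [mul_comm, ENNReal.ofReal_mul (by positivity)]
        norm_cast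

open MeasureTheory Classical in
/-- Conformal risk control coverage guarantee (Proposition 1, i.i.d. form):
with `λ̂` the CRC threshold computed from the `n` i.i.d. calibration samples,
the probability that a fresh i.i.d. sample's critical value `T(z_{n+1})`
exceeds `λ̂` is at most `α`. -/
theorem crc_coverage_iid {Z : Type*} [MeasurableSpace Z] (μ : Measure Z)
    [IsProbabilityMeasure μ] (T : Z → ℝ) (hT : Measurable T)
    (n : ℕ) (hn : 1 ≤ n) (α : ℝ)
    (hα1 : 1 / ((n : ℝ) + 1) ≤ α) (hα2 : α ≤ 1) :
    (Measure.pi fun _ : Fin (n + 1) => μ)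
      {z : Fin (n + 1) → Z |
        sInf {lam : ℝ |
          ((Finset.univ.filter
            (fun i : Fin n => lam < T (z i.castSucc))).card : ℝ) ≤
            α * n + α - 1}
          < T (z (Fin.last n))} ≤ ENNReal.ofReal α :=
  crc_coverage_iid_general μ T hT n α hα1 hα2
end

section
/- Let μ be a probability measure on ℝ, let n ≥ 1 and 1 ≤ k ≤ n, and consider the product measure μ^{⊗(n+1)} on ℝ^{n+1}, so that the coordinates X₁, …, X_{n+1} are i.i.d. with law μ. Let X_(k) denote the k-th smallest value among X₁, …, X_n. Then the probability of the event {X_{n+1} > X_(k)} is at most (n + 1 − k)/(n + 1). -/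
/-!
Write `r_j(z) = #{i | z i < z j}` for the number of coordinates strictly below `z j`; the event
in question is `k ≤ r_{n+1}`. Pointwise, at most `n + 1 - k` indices `j` satisfy `k ≤ r_j`: the
coordinates strictly below the smallest such `z j` lie outside that set of indices, and there
are at least `k` of them. Under the i.i.d. law, permuting coordinates preserves the measure, so
all `n + 1` events `k ≤ r_j` have the same probability; summing gives `(n + 1) p ≤ n + 1 - k`.
Counting strictly smaller values is what makes ties harmless.
-/

open Finset MeasureTheory
open scoped ENNReal

/-- The `k`-th smallest value (1-based) among `x 0, …, x (n-1)`, obtained by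
sorting the tuple in nondecreasing order. -/
noncomputable def kthSmallest {n : ℕ} (x : Fin n → ℝ) (k : ℕ) (h : k - 1 < n) : ℝ :=
  x (Tuple.sort x ⟨k - 1, h⟩)

section StrictRank

variable {ι α : Type*} [Fintype ι] [LinearOrder α]

def strictRank (z : ι → α) (j : ι) : ℕ := #{i | z i < z j}

theorem strictRank_comp_perm (z : ι → α) (σ : Equiv.Perm ι) (j : ι) :
    strictRank (z ∘ σ) j = strictRank z (σ j) := by
  simp only [strictRank, card_filter, Function.comp_apply]
  exact Equiv.sum_comp σ fun i => if z i < z (σ j) then 1 else 0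

theorem card_le_strictRank_le (z : ι → α) (k : ℕ) :
    #{j | k ≤ strictRank z j} ≤ Fintype.card ι - k := by
  classical
  set S : Finset ι := {j | k ≤ strictRank z j}
  rcases S.eq_empty_or_nonempty with hS | hS
  · simp [hS]
  obtain ⟨j₀, hj₀S, hj₀⟩ := S.exists_min_image z hS
  have hdisj : Disjoint S ({i | z i < z j₀} : Finset ι) :=
    disjoint_filter.2 fun i _ hiS hlt => (hj₀ i (mem_filter.2 ⟨mem_univ i, hiS⟩)).not_gt hlt
  have hk : k ≤ strictRank z j₀ := (mem_filter.1 hj₀S).2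
  have := (card_union_of_disjoint hdisj).symm.trans_le (card_le_univ (S ∪ _))
  unfold strictRank at hk
  omega

theorem strictRank_last {n : ℕ} (z : Fin (n + 1) → α) :
    strictRank z (Fin.last n) = #{i : Fin n | z i.castSucc < z (Fin.last n)} := by
  rw [strictRank, card_filter, card_filter, Fin.sum_univ_castSucc]
  simp

theorem measurePreserving_comp_perm {β : Type*} [MeasurableSpace β] (μ : Measure β) [SigmaFinite μ]
    (σ : Equiv.Perm ι) :
    MeasurePreserving (fun z : ι → β => z ∘ σ) (Measure.pi fun _ => μ) (Measure.pi fun _ => μ) :=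
  (measurePreserving_piCongrLeft (fun _ => μ) σ).symm

variable [MeasurableSpace α] [TopologicalSpace α] [OpensMeasurableSpace α] [OrderClosedTopology α]
  [SecondCountableTopology α]

theorem measurable_strictRank (j : ι) : Measurable fun z : ι → α => strictRank z j := by
  simp_rw [strictRank, card_filter]
  exact Finset.measurable_sum _ fun i _ =>
    Measurable.ite (measurableSet_lt (measurable_pi_apply i) (measurable_pi_apply j))
      measurable_const measurable_const

theorem measurableSet_le_strictRank (k : ℕ) (j : ι) :
    MeasurableSet {z : ι → α | k ≤ strictRank z j} :=
  measurableSet_le measurable_const (measurable_strictRank j)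

theorem measure_le_strictRank_eq (μ : Measure α) [SigmaFinite μ] (k : ℕ) (j j' : ι) :
    Measure.pi (fun _ => μ) {z : ι → α | k ≤ strictRank z j} =
      Measure.pi (fun _ => μ) {z : ι → α | k ≤ strictRank z j'} := by
  classical
  have hpre : (fun z : ι → α => z ∘ Equiv.swap j j') ⁻¹' {z | k ≤ strictRank z j} =
      {z | k ≤ strictRank z j'} := by
    ext z
    simp [strictRank_comp_perm]
  rw [← hpre, (measurePreserving_comp_perm μ _).measure_preimage
    (measurableSet_le_strictRank k j).nullMeasurableSet]

theorem sum_measure_le_strictRank_le (μ : Measure α) [IsProbabilityMeasure μ] (k : ℕ) :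
    ∑ j, Measure.pi (fun _ => μ) {z : ι → α | k ≤ strictRank z j} ≤
      ((Fintype.card ι - k : ℕ) : ℝ≥0∞) := by
  have hcount (z : ι → α) :
      ∑ j, {z : ι → α | k ≤ strictRank z j}.indicator 1 z ≤ ((Fintype.card ι - k : ℕ) : ℝ≥0∞) := by
    simp only [Set.indicator_apply, Set.mem_ofPred_eq, Pi.one_apply, sum_boole]
    exact_mod_cast card_le_strictRank_le z k
  calc ∑ j, Measure.pi (fun _ => μ) {z : ι → α | k ≤ strictRank z j}
      = ∫⁻ z, ∑ j, {z : ι → α | k ≤ strictRank z j}.indicator 1 z ∂Measure.pi (fun _ => μ) := by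
        rw [lintegral_finsetSum _ fun j _ =>
          measurable_one.indicator (measurableSet_le_strictRank k j)]
        simp [lintegral_indicator_one (measurableSet_le_strictRank k _)]
    _ ≤ ∫⁻ _, ((Fintype.card ι - k : ℕ) : ℝ≥0∞) ∂Measure.pi (fun _ => μ) := lintegral_mono hcount
    _ = _ := by simp

theorem measure_le_strictRank_le (μ : Measure α) [IsProbabilityMeasure μ] (k : ℕ) (j : ι) :
    Measure.pi (fun _ => μ) {z : ι → α | k ≤ strictRank z j} ≤
      ((Fintype.card ι - k : ℕ) : ℝ≥0∞) / Fintype.card ι := by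
  have : Nonempty ι := ⟨j⟩
  rw [ENNReal.le_div_iff_mul_le (.inl (Nat.cast_ne_zero.2 Fintype.card_ne_zero))
    (.inl (ENNReal.natCast_ne_top _)), mul_comm]
  calc (Fintype.card ι : ℝ≥0∞) * Measure.pi (fun _ => μ) {z : ι → α | k ≤ strictRank z j}
      = ∑ j', Measure.pi (fun _ => μ) {z : ι → α | k ≤ strictRank z j'} := by
        simp [measure_le_strictRank_eq μ k _ j]
    _ ≤ _ := sum_measure_le_strictRank_le μ k

end StrictRank

theorem Monotone.lt_iff_lt_card_filter_lt {n : ℕ} {α : Type*} [LinearOrder α] {y : Fin n → α}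
    (hy : Monotone y) (r : Fin n) (t : α) : y r < t ↔ (r : ℕ) < #{i | y i < t} := by
  constructor
  · intro hrt
    have hsub : Iic r ⊆ ({i | y i < t} : Finset (Fin n)) := fun i hi =>
      mem_filter.2 ⟨mem_univ i, (hy (mem_Iic.1 hi)).trans_lt hrt⟩
    have := card_le_card hsub
    rw [Fin.card_Iic] at this
    omega
  · intro hr
    by_contra! htr
    have hsub : ({i | y i < t} : Finset (Fin n)) ⊆ Iio r := fun i hi => mem_Iio.2 <|
      lt_of_not_ge fun hri => ((mem_filter.1 hi).2.trans_le' (hy hri)).not_ge htr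
    have := card_le_card hsub
    rw [Fin.card_Iio] at this
    omega

theorem kthSmallest_lt_iff {n : ℕ} (x : Fin n → ℝ) (k : ℕ) (h : k - 1 < n) (t : ℝ) :
    kthSmallest x k h < t ↔ k - 1 < #{i | x i < t} := by
  rw [kthSmallest, ← Function.comp_apply (f := x),
    (Tuple.monotone_sort x).lt_iff_lt_card_filter_lt]
  simp only [card_filter, Function.comp_apply]
  rw [Equiv.sum_comp (Tuple.sort x) fun i => if x i < t then 1 else 0]

open MeasureTheory in
/-- Order-statistic coverage bound: if `X₁, …, X_{n+1}` are i.i.d. with law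
`μ`, then the probability that `X_{n+1}` strictly exceeds the `k`-th smallest
of `X₁, …, X_n` is at most `(n + 1 − k)/(n + 1)`. -/
theorem order_statistic_coverage (μ : Measure ℝ) [IsProbabilityMeasure μ]
    (n k : ℕ) (hn : 1 ≤ n) (hkn : k ≤ n) :
    (Measure.pi fun _ : Fin (n + 1) => μ)
      {z : Fin (n + 1) → ℝ |
        kthSmallest (fun i : Fin n => z i.castSucc) k (by omega) < z (Fin.last n)}
      ≤ ENNReal.ofReal (((n : ℝ) + 1 - k) / ((n : ℝ) + 1)) := by
  have hevent : {z : Fin (n + 1) → ℝ |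
      kthSmallest (fun i : Fin n => z i.castSucc) k (by omega) < z (Fin.last n)} =
      {z | k - 1 + 1 ≤ strictRank z (Fin.last n)} := by
    ext z
    rw [Set.mem_ofPred_eq, Set.mem_ofPred_eq, kthSmallest_lt_iff, strictRank_last]
    exact Nat.lt_iff_add_one_le
  have hcount : ((n + 1 - (k - 1 + 1) : ℕ) : ℝ) ≤ n + 1 - k := by
    have : ((n + 1 - (k - 1 + 1) : ℕ) : ℝ) + k ≤ n + 1 := by
      exact_mod_cast (show n + 1 - (k - 1 + 1) + k ≤ n + 1 by omega)
    linarith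
  rw [hevent, ENNReal.ofReal_div_of_pos (by positivity)]
  refine (measure_le_strictRank_le μ _ _).trans ?_
  rw [Fintype.card_fin, ← ENNReal.ofReal_natCast, ← ENNReal.ofReal_natCast, Nat.cast_succ]
  gcongr
end

section
/- Let (Z, 𝒜) be a measurable space, let P and Q be probability measures on Z with Q absolutely continuous with respect to P, and let p : Z → ℝ be a nonnegative measurable representative of the Radon–Nikodym derivative dQ/dP. Let T : Z → ℝ be measurable, n ≥ 1, and α ∈ (0, 1]. On Z^{n+1} equip the first n coordinates with the product law P^{⊗n} and the last coordinate, independently, with law Q. For z = (z₁, …, z_{n+1}) define D(z) = Σ_{j=1}^{n} p(z_j) + p(z_{n+1}), ω_i(z) = p(z_i)/D(z) for i = 1, …, n, and ω'(z) = p(z_{n+1})/D(z) (using the convention that these weights are 0 when D(z) = 0, which happens only on a null set). Then the probability of the event {z : ∃ λ ∈ ℝ such that Σ_{i=1}^{n} ω_i(z)·1(λ < T(z_i)) ≤ α − ω'(z) and λ < T(z_{n+1})} is at most α. -/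
open MeasureTheory ENNReal

section Aux

variable {Z : Type*} [MeasurableSpace Z]

/-- Pointwise weighted quantile lemma. -/
private lemma wcrc_ptwise {m : ℕ} (q s : Fin m → ℝ) (hq : ∀ i, 0 ≤ q i) {a : ℝ} (ha : 0 ≤ a) :
    (∑ k : Fin m, if (∑ i : Fin m, q i * (if s k ≤ s i then (1:ℝ) else 0)) ≤ a * ∑ i : Fin m, q i
      then q k else 0) ≤ a * ∑ i : Fin m, q i := by
  classical
  set S := a * ∑ i : Fin m, q i with hS
  have hS0 : 0 ≤ S := mul_nonneg ha (Finset.sum_nonneg fun i _ => hq i)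
  set K := Finset.univ.filter
    (fun k => (∑ i : Fin m, q i * (if s k ≤ s i then (1:ℝ) else 0)) ≤ S) with hK
  have hrw : (∑ k : Fin m,
      if (∑ i : Fin m, q i * (if s k ≤ s i then (1:ℝ) else 0)) ≤ S then q k else 0)
      = ∑ k ∈ K, q k := (Finset.sum_filter _ _).symm
  rw [hrw]
  rcases K.eq_empty_or_nonempty with h | h
  · simp [h, hS0]
  · obtain ⟨k0, hk0, hmin⟩ := K.exists_min_image s h
    have hsub : K ⊆ Finset.univ.filter (fun k => s k0 ≤ s k) := by
      intro k hk
      exact Finset.mem_filter.2 ⟨Finset.mem_univ _, hmin k hk⟩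
    calc ∑ k ∈ K, q k ≤ ∑ k ∈ Finset.univ.filter (fun k => s k0 ≤ s k), q k :=
          Finset.sum_le_sum_of_subset_of_nonneg hsub (fun i _ _ => hq i)
      _ = ∑ i : Fin m, q i * (if s k0 ≤ s i then (1:ℝ) else 0) := by
          rw [Finset.sum_filter]
          exact Finset.sum_congr rfl fun i _ => by by_cases hi : s k0 ≤ s i <;> simp [hi]
      _ ≤ S := (Finset.mem_filter.1 hk0).2

/-- Permutation invariance of the i.i.d. product measure. -/
private lemma wcrc_perm (P : Measure Z) [IsProbabilityMeasure P] {m : ℕ}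
    (σ : Equiv.Perm (Fin m)) :
    MeasurePreserving (fun z : Fin m → Z => z ∘ σ)
      (Measure.pi fun _ => P) (Measure.pi fun _ => P) := by
  constructor
  · exact measurable_pi_lambda _ fun i => measurable_pi_apply (σ i)
  · refine (Measure.pi_eq (μ := fun _ => P) fun s hs => ?_).symm
    have hm : Measurable fun z : Fin m → Z => z ∘ ⇑σ :=
      measurable_pi_lambda _ fun i => measurable_pi_apply (σ i)
    rw [Measure.map_apply hm (MeasurableSet.univ_pi hs)]
    have hpre : (fun z : Fin m → Z => z ∘ σ) ⁻¹' (Set.univ.pi s)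
        = Set.univ.pi (fun j => s (σ.symm j)) := by
      ext z
      simp only [Set.mem_preimage, Set.mem_pi, Set.mem_univ, forall_true_left, Function.comp]
      constructor
      · intro hzz j; simpa using hzz (σ.symm j)
      · intro hzz i; simpa using hzz (σ i)
    rw [hpre, Measure.pi_pi]
    exact Equiv.prod_comp σ.symm (fun i => P (s i))

/-- Evaluation marginal of an i.i.d. product measure. -/
private lemma wcrc_eval (P : Measure Z) [IsProbabilityMeasure P] {m : ℕ} (i : Fin (m + 1))
    (g : Z → ℝ≥0∞) (hg : Measurable g) :
    ∫⁻ z : Fin (m + 1) → Z, g (z i) ∂(Measure.pi fun _ => P) = ∫⁻ x, g x ∂P := by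
  set e := MeasurableEquiv.piFinSuccAbove (fun _ : Fin (m + 1) => Z) i with he
  have h2 : MeasurePreserving e (Measure.pi fun _ => P)
      (P.prod (Measure.pi fun _ : Fin m => P)) :=
    measurePreserving_piFinSuccAbove (fun _ => P) i
  have hfst : Measurable fun q : Z × (Fin m → Z) => g q.1 := hg.comp measurable_fst
  have hcomp := h2.lintegral_comp (f := fun q : Z × (Fin m → Z) => g q.1) hfst
  calc ∫⁻ z : Fin (m + 1) → Z, g (z i) ∂(Measure.pi fun _ => P)
      = ∫⁻ z : Fin (m + 1) → Z, g ((e z).1) ∂(Measure.pi fun _ => P) := rfl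
    _ = ∫⁻ q : Z × (Fin m → Z), g q.1 ∂(P.prod (Measure.pi fun _ : Fin m => P)) := hcomp
    _ = ∫⁻ x, g x ∂P := by
        rw [lintegral_prod _ hfst.aemeasurable]
        simp

/-- Transfer from the shifted product measure to a density against the i.i.d. measure. -/
private lemma wcrc_density (P Q : Measure Z) [IsProbabilityMeasure P] [IsProbabilityMeasure Q]
    (g : Z → ℝ≥0∞) (hg : Measurable g) (hQ : Q = P.withDensity g) (n : ℕ)
    (h : (Fin (n + 1) → Z) → ℝ≥0∞) (hh : Measurable h) :
    ∫⁻ z, h z ∂(Measure.pi fun i : Fin (n + 1) => if i = Fin.last n then Q else P)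
      = ∫⁻ z, h z * g (z (Fin.last n)) ∂(Measure.pi fun _ : Fin (n + 1) => P) := by
  set e := MeasurableEquiv.piFinSuccAbove (fun _ : Fin (n + 1) => Z) (Fin.last n) with he
  set νn : Measure (Fin n → Z) := Measure.pi fun _ => P with hνn
  haveI hsf : ∀ i : Fin (n + 1),
      SigmaFinite ((fun i : Fin (n + 1) => if i = Fin.last n then Q else P) i) := fun i => by
    by_cases hi : i = Fin.last n <;> simp only [hi, if_pos, if_neg, ite_true, ite_false] <;>
      infer_instance
  have h1 : MeasurePreserving e
      (Measure.pi fun i : Fin (n + 1) => if i = Fin.last n then Q else P) (Q.prod νn) := by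
    have base := measurePreserving_piFinSuccAbove
      (fun i : Fin (n + 1) => if i = Fin.last n then Q else P) (Fin.last n)
    convert base using 1
    congr 1
    · exact (if_pos rfl).symm
    · rw [hνn]
      congr 1
      funext j
      exact (if_neg (Fin.succAbove_ne _ j)).symm
  have h2 : MeasurePreserving e (Measure.pi fun _ : Fin (n + 1) => P) (P.prod νn) :=
    measurePreserving_piFinSuccAbove (fun _ => P) (Fin.last n)
  have hFm : Measurable fun q : Z × (Fin n → Z) => h (e.symm q) := hh.comp e.symm.measurable
  have hFm' : Measurable (Function.uncurry fun x y => h (e.symm (x, y))) := hFm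
  have hinner : Measurable fun x : Z => ∫⁻ y, h (e.symm (x, y)) ∂νn :=
    hFm'.lintegral_prod_right
  have hGF : Measurable fun q : Z × (Fin n → Z) => g q.1 * h (e.symm q) :=
    (hg.comp measurable_fst).mul hFm
  have hfst : (e : (Fin (n + 1) → Z) → Z × (Fin n → Z)) = fun z => (z (Fin.last n), Fin.removeNth (Fin.last n) z) := by
    rw [he]; rfl
  calc ∫⁻ z, h z ∂(Measure.pi fun i : Fin (n + 1) => if i = Fin.last n then Q else P)
      = ∫⁻ q, h (e.symm q) ∂(Q.prod νn) := by
        rw [← h1.lintegral_comp hFm]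
        exact lintegral_congr fun z => by rw [MeasurableEquiv.symm_apply_apply]
    _ = ∫⁻ x, ∫⁻ y, h (e.symm (x, y)) ∂νn ∂Q := lintegral_prod _ hFm.aemeasurable
    _ = ∫⁻ x, g x * ∫⁻ y, h (e.symm (x, y)) ∂νn ∂P := by
        rw [hQ, lintegral_withDensity_eq_lintegral_mul P hg hinner]; rfl
    _ = ∫⁻ x, ∫⁻ y, g x * h (e.symm (x, y)) ∂νn ∂P := by
        refine lintegral_congr fun x => ?_
        have hx : Measurable fun y : Fin n → Z => h (e.symm (x, y)) :=
          hFm.comp measurable_prodMk_left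
        rw [lintegral_const_mul _ hx]
    _ = ∫⁻ q, g q.1 * h (e.symm q) ∂(P.prod νn) := (lintegral_prod _ hGF.aemeasurable).symm
    _ = ∫⁻ z, g ((e z).1) * h (e.symm (e z)) ∂(Measure.pi fun _ : Fin (n + 1) => P) :=
        (h2.lintegral_comp hGF).symm
    _ = ∫⁻ z, h z * g (z (Fin.last n)) ∂(Measure.pi fun _ : Fin (n + 1) => P) := by
        refine lintegral_congr fun z => ?_
        rw [MeasurableEquiv.symm_apply_apply, mul_comm, hfst]

end Aux

open MeasureTheory Classical in
/-- Weighted conformal risk control under covariate shift (Proposition 2):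
the calibration samples are i.i.d. `P`, the test sample has law `Q ≪ P` with
likelihood ratio `p = dQ/dP`, and with the importance weights
`ω_i = p(z_i)/D`, `ω' = p(z_{n+1})/D`, `D = Σ_j p(z_j) + p(z_{n+1})`,
the probability that some threshold `λ` satisfies the weighted calibration
condition `Σ ω_i 1(λ < T(z_i)) ≤ α − ω'` while `λ < T(z_{n+1})` is at most
`α`. (By real-division conventions the weights are `0` when `D = 0`.) -/
theorem weighted_crc_coverage {Z : Type*} [MeasurableSpace Z]
    (P Q : Measure Z) [IsProbabilityMeasure P] [IsProbabilityMeasure Q]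
    (hQP : Q ≪ P) (p : Z → ℝ) (hp : Measurable p) (hp0 : ∀ z, 0 ≤ p z)
    (hpRN : ∀ᵐ z ∂P, ENNReal.ofReal (p z) = Q.rnDeriv P z)
    (T : Z → ℝ) (hT : Measurable T) (n : ℕ) (hn : 1 ≤ n)
    (α : ℝ) (hα0 : 0 < α) (hα1 : α ≤ 1) :
    (Measure.pi fun i : Fin (n + 1) => if i = Fin.last n then Q else P)
      {z : Fin (n + 1) → Z | ∃ lam : ℝ,
        (∑ i : Fin n,
          (p (z i.castSucc) /
            ((∑ j : Fin n, p (z j.castSucc)) + p (z (Fin.last n)))) *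
              (if lam < T (z i.castSucc) then (1 : ℝ) else 0)) ≤
          α - p (z (Fin.last n)) /
            ((∑ j : Fin n, p (z j.castSucc)) + p (z (Fin.last n))) ∧
        lam < T (z (Fin.last n))} ≤ ENNReal.ofReal α := by
  classical
  set ν : Measure (Fin (n + 1) → Z) := Measure.pi fun _ => P with hν
  set g : Z → ℝ≥0∞ := fun x => ENNReal.ofReal (p x) with hgdef
  have hgm : Measurable g := ENNReal.measurable_ofReal.comp hp
  have hQd : Q = P.withDensity g :=
    ((withDensity_congr_ae hpRN).trans (Measure.withDensity_rnDeriv_eq Q P hQP)).symm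
  set C : Fin (n + 1) → (Fin (n + 1) → Z) → Prop := fun k z =>
    (∑ i : Fin (n + 1), p (z i) * (if T (z k) ≤ T (z i) then (1:ℝ) else 0))
      ≤ α * ∑ i : Fin (n + 1), p (z i) with hC
  have hCm : ∀ k, MeasurableSet {z : Fin (n + 1) → Z | C k z} := by
    intro k
    refine measurableSet_le (Finset.measurable_sum _ fun i _ => ?_)
      (measurable_const.mul (Finset.measurable_sum _ fun i _ =>
        hp.comp (measurable_pi_apply i)))
    exact (hp.comp (measurable_pi_apply i)).mul
      (Measurable.ite (measurableSet_le (hT.comp (measurable_pi_apply k))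
        (hT.comp (measurable_pi_apply i))) measurable_const measurable_const)
  -- inclusion into the measurable event C (last)
  have hsub : {z : Fin (n + 1) → Z | ∃ lam : ℝ,
        (∑ i : Fin n,
          (p (z i.castSucc) /
            ((∑ j : Fin n, p (z j.castSucc)) + p (z (Fin.last n)))) *
              (if lam < T (z i.castSucc) then (1 : ℝ) else 0)) ≤
          α - p (z (Fin.last n)) /
            ((∑ j : Fin n, p (z j.castSucc)) + p (z (Fin.last n))) ∧
        lam < T (z (Fin.last n))} ⊆ {z | C (Fin.last n) z} := by
    rintro z ⟨lam, h1, h2⟩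
    set D : ℝ := (∑ j : Fin n, p (z j.castSucc)) + p (z (Fin.last n)) with hD
    have hDsum : D = ∑ i : Fin (n + 1), p (z i) :=
      (Fin.sum_univ_castSucc (fun i => p (z i))).symm
    have hD0 : 0 ≤ D := by
      rw [hDsum]; exact Finset.sum_nonneg fun i _ => hp0 _
    by_cases hDz : D = 0
    · have hsum0 : ∑ i : Fin (n + 1), p (z i) = 0 := by rw [← hDsum, hDz]
      have hz : ∀ i : Fin (n + 1), p (z i) = 0 := fun i =>
        (Finset.sum_eq_zero_iff_of_nonneg (fun i _ => hp0 _)).1 hsum0 i (Finset.mem_univ i)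
      show C (Fin.last n) z
      simp [hC, hz]
    · have hDpos : 0 < D := lt_of_le_of_ne hD0 (Ne.symm hDz)
      have h1' : (∑ i : Fin n, p (z i.castSucc) * (if lam < T (z i.castSucc) then (1:ℝ) else 0))
          ≤ α * D - p (z (Fin.last n)) := by
        have hrw : (∑ i : Fin n,
            (p (z i.castSucc) / D) * (if lam < T (z i.castSucc) then (1:ℝ) else 0))
            = (∑ i : Fin n, p (z i.castSucc) * (if lam < T (z i.castSucc) then (1:ℝ) else 0)) / D := by
          rw [Finset.sum_div]
          exact Finset.sum_congr rfl fun i _ => by ring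
        rw [hrw, div_le_iff₀ hDpos] at h1
        have heq : (α - p (z (Fin.last n)) / D) * D = α * D - p (z (Fin.last n)) := by
          field_simp
        rw [heq] at h1
        exact h1
      show C (Fin.last n) z
      have hexp : (∑ i : Fin (n + 1), p (z i) * (if T (z (Fin.last n)) ≤ T (z i) then (1:ℝ) else 0))
          = (∑ i : Fin n, p (z i.castSucc) *
              (if T (z (Fin.last n)) ≤ T (z i.castSucc) then (1:ℝ) else 0))
            + p (z (Fin.last n)) := by
        rw [Fin.sum_univ_castSucc
          (fun i => p (z i) * (if T (z (Fin.last n)) ≤ T (z i) then (1:ℝ) else 0))]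
        simp
      have hterm : (∑ i : Fin n, p (z i.castSucc) *
            (if T (z (Fin.last n)) ≤ T (z i.castSucc) then (1:ℝ) else 0))
          ≤ ∑ i : Fin n, p (z i.castSucc) * (if lam < T (z i.castSucc) then (1:ℝ) else 0) := by
        refine Finset.sum_le_sum fun i _ => ?_
        by_cases hi : T (z (Fin.last n)) ≤ T (z i.castSucc)
        · have : lam < T (z i.castSucc) := lt_of_lt_of_le h2 hi
          simp [hi, this]
        · simp only [hi, if_false, mul_zero]
          exact mul_nonneg (hp0 _) (by positivity)
      show (∑ i : Fin (n + 1), p (z i) * (if T (z (Fin.last n)) ≤ T (z i) then (1:ℝ) else 0))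
          ≤ α * ∑ i : Fin (n + 1), p (z i)
      rw [hexp, ← hDsum]
      linarith
  set G : Fin (n + 1) → (Fin (n + 1) → Z) → ℝ≥0∞ := fun k z => if C k z then g (z k) else 0
    with hG
  have hGm : ∀ k, Measurable (G k) := fun k =>
    Measurable.ite (hCm k) (hgm.comp (measurable_pi_apply k)) measurable_const
  -- step 1 : measure of the event as an integral against ν
  have step1 : (Measure.pi fun i : Fin (n + 1) => if i = Fin.last n then Q else P)
      {z | C (Fin.last n) z} = ∫⁻ z, G (Fin.last n) z ∂ν := by
    have hmeas : Measurable fun z : Fin (n + 1) → Z =>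
        (if C (Fin.last n) z then (1:ℝ≥0∞) else 0) :=
      Measurable.ite (hCm (Fin.last n)) measurable_const measurable_const
    have := wcrc_density P Q g hgm hQd n _ hmeas
    have hμ : ∫⁻ z, (if C (Fin.last n) z then (1:ℝ≥0∞) else 0)
        ∂(Measure.pi fun i : Fin (n + 1) => if i = Fin.last n then Q else P)
        = (Measure.pi fun i : Fin (n + 1) => if i = Fin.last n then Q else P)
          {z | C (Fin.last n) z} := by
      rw [← lintegral_indicator_one (hCm (Fin.last n))]
      exact lintegral_congr fun z => by by_cases hz : C (Fin.last n) z <;>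
        simp [Set.indicator_apply, hz]
    rw [← hμ, this]
    refine lintegral_congr fun z => ?_
    by_cases hz : C (Fin.last n) z <;> simp [hG, hz]
  -- step 2 : exchangeability
  have stepk : ∀ k : Fin (n + 1), ∫⁻ z, G k z ∂ν = ∫⁻ z, G (Fin.last n) z ∂ν := by
    intro k
    set σ : Equiv.Perm (Fin (n + 1)) := Equiv.swap (Fin.last n) k with hσ
    have hmp := (wcrc_perm P σ).lintegral_comp (hGm (Fin.last n))
    rw [← hmp]
    refine lintegral_congr fun z => ?_
    have h1 : (z ∘ σ) (Fin.last n) = z k := by simp [hσ, Equiv.swap_apply_left]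
    have hσk : σ (Fin.last n) = k := Equiv.swap_apply_left _ _
    have h2 : C (Fin.last n) (z ∘ σ) ↔ C k z := by
      simp only [hC, Function.comp_apply, Function.comp]
      simp only [hσk]
      rw [Equiv.sum_comp σ (fun j => p (z j) * (if T (z k) ≤ T (z j) then (1:ℝ) else 0)),
        Equiv.sum_comp σ (fun j => p (z j))]
    simp only [hG, h2, h1]
  -- pointwise bound for the sum over k
  have hsumpt : ∀ z : Fin (n + 1) → Z,
      (∑ k : Fin (n + 1), G k z) ≤ ENNReal.ofReal α * ∑ i : Fin (n + 1), g (z i) := by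
    intro z
    have hreal := wcrc_ptwise (fun i => p (z i)) (fun i => T (z i))
      (fun i => hp0 _) hα0.le
    have hG' : ∀ k, G k z = ENNReal.ofReal (if C k z then p (z k) else 0) := by
      intro k; by_cases hk : C k z <;> simp [hG, hgdef, hk]
    calc (∑ k : Fin (n + 1), G k z)
        = ENNReal.ofReal (∑ k : Fin (n + 1), if C k z then p (z k) else 0) := by
          rw [ENNReal.ofReal_sum_of_nonneg fun k _ => by
            by_cases hk : C k z <;> simp [hk, hp0]]
          exact Finset.sum_congr rfl fun k _ => hG' k
      _ ≤ ENNReal.ofReal (α * ∑ i : Fin (n + 1), p (z i)) := ENNReal.ofReal_le_ofReal hreal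
      _ = ENNReal.ofReal α * ∑ i : Fin (n + 1), g (z i) := by
          rw [ENNReal.ofReal_mul hα0.le,
            ENNReal.ofReal_sum_of_nonneg fun i _ => hp0 _]
  -- integral of the total density
  have hg1 : ∫⁻ x, g x ∂P = 1 := by
    have h1 : ∫⁻ x, g x ∂P = ∫⁻ x, Q.rnDeriv P x ∂P := lintegral_congr_ae hpRN
    rw [h1, Measure.lintegral_rnDeriv hQP]
    simp
  have heval : ∀ i : Fin (n + 1), ∫⁻ z, g (z i) ∂ν = 1 := fun i => by
    rw [hν, wcrc_eval P i g hgm, hg1]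
  -- combine
  have hbound : (↑(n + 1) : ℝ≥0∞) * ∫⁻ z, G (Fin.last n) z ∂ν
      ≤ ENNReal.ofReal α * ↑(n + 1) := by
    have hsum : ∑ k : Fin (n + 1), ∫⁻ z, G k z ∂ν
        = (↑(n + 1) : ℝ≥0∞) * ∫⁻ z, G (Fin.last n) z ∂ν := by
      rw [Finset.sum_congr rfl fun k _ => stepk k]
      simp [Finset.sum_const, mul_comm, nsmul_eq_mul]
    calc (↑(n + 1) : ℝ≥0∞) * ∫⁻ z, G (Fin.last n) z ∂ν
        = ∑ k : Fin (n + 1), ∫⁻ z, G k z ∂ν := hsum.symm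
      _ = ∫⁻ z, ∑ k : Fin (n + 1), G k z ∂ν :=
          (lintegral_finset_sum _ fun k _ => hGm k).symm
      _ ≤ ∫⁻ z, ENNReal.ofReal α * ∑ i : Fin (n + 1), g (z i) ∂ν :=
          lintegral_mono hsumpt
      _ = ENNReal.ofReal α * ∑ i : Fin (n + 1), ∫⁻ z, g (z i) ∂ν := by
          have hGi : ∀ i : Fin (n + 1), Measurable fun z : Fin (n + 1) → Z => g (z i) :=
            fun i => hgm.comp (measurable_pi_apply i)
          have hsumMeas : Measurable fun z : Fin (n + 1) → Z => ∑ i : Fin (n + 1), g (z i) :=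
            Finset.measurable_sum _ fun i _ => hGi i
          rw [lintegral_const_mul _ hsumMeas, lintegral_finset_sum _ fun i _ => hGi i]
      _ = ENNReal.ofReal α * ↑(n + 1) := by
          rw [Finset.sum_congr rfl fun i _ => heval i]
          simp
  have hlast : ∫⁻ z, G (Fin.last n) z ∂ν ≤ ENNReal.ofReal α := by
    have hne0 : (↑(n + 1) : ℝ≥0∞) ≠ 0 := Nat.cast_ne_zero.mpr (Nat.succ_ne_zero n)
    have hnetop : (↑(n + 1) : ℝ≥0∞) ≠ ⊤ := ENNReal.natCast_ne_top _
    rw [mul_comm (ENNReal.ofReal α) _] at hbound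
    exact (ENNReal.mul_le_mul_iff_right hne0 hnetop).1 hbound
  refine le_trans (measure_mono hsub) ?_
  rw [step1]
  exact hlast
end

section
/- Let (Z, 𝒜) be a measurable space, n ≥ 1, and let ν be a probability measure on Z^{n+1} that is exchangeable, i.e., for every permutation σ of {1, …, n+1}, the pushforward of ν under the coordinate-permutation map (z₁, …, z_{n+1}) ↦ (z_{σ(1)}, …, z_{σ(n+1)}) equals ν. Let T : Z → ℝ be measurable and let α ∈ ℝ with 1/(n+1) ≤ α ≤ 1. Define λ̂(z₁, …, z_n) = sInf{λ ∈ ℝ : |{i ∈ {1, …, n} : λ < T(z_i)}| ≤ α·n + α − 1}. Then ν({z : λ̂(z₁, …, z_n) < T(z_{n+1})}) ≤ α. -/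
open MeasureTheory Classical in
lemma crc_card_filter_perm {β : Type*} [Fintype β] (σ : Equiv.Perm β)
    (Q : β → Prop) :
    (Finset.univ.filter (fun i => Q (σ i))).card = (Finset.univ.filter Q).card :=
  Finset.card_equiv σ (by simp)

open MeasureTheory Classical in
/-- Conformal risk control coverage guarantee under exchangeability
(Proposition 1 in exchangeable generality): if the joint law `ν` of the `n`
calibration samples and the test sample on `Z^{n+1}` is invariant under all
coordinate permutations, then the probability that the test critical value
`T(z_{n+1})` exceeds the CRC threshold `λ̂(z₁, …, z_n)` is at most `α`. -/
theorem crc_coverage_exchangeable {Z : Type*} [MeasurableSpace Z] (n : ℕ)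
    (hn : 1 ≤ n) (ν : Measure (Fin (n + 1) → Z)) [IsProbabilityMeasure ν]
    (hexch : ∀ σ : Equiv.Perm (Fin (n + 1)),
      Measure.map (fun z : Fin (n + 1) → Z => fun i => z (σ i)) ν = ν)
    (T : Z → ℝ) (hT : Measurable T) (α : ℝ)
    (hα1 : 1 / ((n : ℝ) + 1) ≤ α) (hα2 : α ≤ 1) :
    ν {z : Fin (n + 1) → Z |
        sInf {lam : ℝ |
          ((Finset.univ.filter
            (fun i : Fin n => lam < T (z i.castSucc))).card : ℝ) ≤
            α * n + α - 1}
          < T (z (Fin.last n))} ≤ ENNReal.ofReal α := by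
  classical
  have hnpos : (0:ℝ) < (n:ℝ) + 1 := by positivity
  have h1le : 1 ≤ α * ((n:ℝ) + 1) := by
    rw [div_le_iff₀ hnpos] at hα1; linarith
  have hα0 : 0 ≤ α := by nlinarith
  rcases le_or_gt 1 α with h1 | h1
  · calc ν _ ≤ 1 := prob_le_one
      _ = ENNReal.ofReal 1 := by simp
      _ ≤ ENNReal.ofReal α := ENNReal.ofReal_le_ofReal h1
  -- main case α < 1
  set A : Fin (n+1) → Set (Fin (n+1) → Z) := fun j =>
    {z | ((Finset.univ.filter (fun i : Fin (n+1) => T (z j) ≤ T (z i))).card : ℝ)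
      ≤ α * ((n:ℝ)+1)} with hA
  have hAmeas : ∀ j, MeasurableSet (A j) := by
    intro j
    have hf : Measurable fun z : Fin (n+1) → Z =>
        ∑ i : Fin (n+1), if T (z j) ≤ T (z i) then (1:ℝ) else 0 :=
      Finset.measurable_sum _ fun i _ =>
        Measurable.ite
          (measurableSet_le (hT.comp (measurable_pi_apply j))
            (hT.comp (measurable_pi_apply i)))
          measurable_const measurable_const
    have heq : A j = (fun z : Fin (n+1) → Z =>
        ∑ i : Fin (n+1), if T (z j) ≤ T (z i) then (1:ℝ) else 0) ⁻¹'
        Set.Iic (α * ((n:ℝ)+1)) := by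
      ext z
      simp only [hA, Set.mem_setOf_eq, Set.mem_preimage, Set.mem_Iic,
        Finset.card_filter]
      push_cast
      rfl
    rw [heq]
    exact hf measurableSet_Iic
  -- Step 1: the event is contained in A (Fin.last n)
  have hsub : {z : Fin (n + 1) → Z |
        sInf {lam : ℝ |
          ((Finset.univ.filter
            (fun i : Fin n => lam < T (z i.castSucc))).card : ℝ) ≤
            α * n + α - 1}
          < T (z (Fin.last n))} ⊆ A (Fin.last n) := by
    intro z hz
    simp only [Set.mem_setOf_eq] at hz
    set t := T (z (Fin.last n)) with ht
    set S := {lam : ℝ |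
      ((Finset.univ.filter (fun i : Fin n => lam < T (z i.castSucc))).card : ℝ) ≤
        α * n + α - 1} with hS
    have hne : Nonempty (Fin n) := ⟨⟨0, hn⟩⟩
    have huniv : (Finset.univ : Finset (Fin n)).Nonempty := Finset.univ_nonempty
    have hSne : S.Nonempty := by
      refine ⟨Finset.univ.sup' huniv (fun i => T (z i.castSucc)), ?_⟩
      have : (Finset.univ.filter (fun i : Fin n =>
          Finset.univ.sup' huniv (fun i => T (z i.castSucc)) < T (z i.castSucc)))
          = ∅ := by
        apply Finset.filter_false_of_mem
        intro i _
        exact not_lt.2 (Finset.le_sup' (fun i => T (z i.castSucc)) (Finset.mem_univ i))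
      simp only [hS, Set.mem_setOf_eq, this, Finset.card_empty, Nat.cast_zero]
      linarith
    have hSbdd : BddBelow S := by
      refine ⟨Finset.univ.inf' huniv (fun i => T (z i.castSucc)), ?_⟩
      intro lam hlam
      by_contra hcon
      push_neg at hcon
      have hall : (Finset.univ.filter (fun i : Fin n => lam < T (z i.castSucc)))
          = Finset.univ := by
        apply Finset.filter_true_of_mem
        intro i _
        exact lt_of_lt_of_le hcon (Finset.inf'_le _ (Finset.mem_univ i))
      simp only [hS, Set.mem_setOf_eq, hall, Finset.card_univ, Fintype.card_fin] at hlam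
      nlinarith
    obtain ⟨lam, hlamS, hlamlt⟩ := (csInf_lt_iff hSbdd hSne).mp hz
    simp only [hS, Set.mem_setOf_eq] at hlamS
    -- bound the full rank
    simp only [hA, Set.mem_setOf_eq]
    have hcard : ((Finset.univ.filter
        (fun i : Fin (n+1) => t ≤ T (z i))).card : ℝ) ≤
        ((Finset.univ.filter (fun i : Fin n => lam < T (z i.castSucc))).card : ℝ) + 1 := by
      have h1 : (Finset.univ.filter (fun i : Fin (n+1) => t ≤ T (z i))).card
          = ∑ i : Fin (n+1), if t ≤ T (z i) then 1 else 0 := Finset.card_filter _ _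
      have h2 : (Finset.univ.filter (fun i : Fin n => lam < T (z i.castSucc))).card
          = ∑ i : Fin n, if lam < T (z i.castSucc) then 1 else 0 := Finset.card_filter _ _
      rw [h1, h2, Fin.sum_univ_castSucc (fun i : Fin (n+1) => if t ≤ T (z i) then 1 else 0)]
      push_cast
      have hle : ∑ i : Fin n, (if t ≤ T (z i.castSucc) then (1:ℝ) else 0)
          ≤ ∑ i : Fin n, (if lam < T (z i.castSucc) then (1:ℝ) else 0) := by
        apply Finset.sum_le_sum
        intro i _
        by_cases h : t ≤ T (z i.castSucc)
        · rw [if_pos h, if_pos (lt_of_lt_of_le hlamlt h)]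
        · rw [if_neg h]; positivity
      have hlast : (if t ≤ T (z (Fin.last n)) then (1:ℝ) else 0) = 1 := if_pos le_rfl
      rw [hlast]
      linarith
    calc ((Finset.univ.filter (fun i : Fin (n+1) => T (z (Fin.last n)) ≤ T (z i))).card : ℝ)
        ≤ ((Finset.univ.filter (fun i : Fin n => lam < T (z i.castSucc))).card : ℝ) + 1 := hcard
      _ ≤ (α * n + α - 1) + 1 := by linarith
      _ = α * ((n:ℝ)+1) := by ring
  -- Step 2: exchangeability gives equal measure for all A j
  have hAeq : ∀ j, ν (A j) = ν (A (Fin.last n)) := by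
    intro j
    set σ := Equiv.swap j (Fin.last n) with hσ
    have hmp : Measurable (fun z : Fin (n+1) → Z => fun i => z (σ i)) :=
      measurable_pi_lambda _ fun i => measurable_pi_apply (σ i)
    have hpre : (fun z : Fin (n+1) → Z => fun i => z (σ i)) ⁻¹' A (Fin.last n) = A j := by
      ext z
      simp only [hA, Set.mem_preimage, Set.mem_setOf_eq]
      have hσlast : σ (Fin.last n) = j := Equiv.swap_apply_right _ _
      rw [crc_card_filter_perm σ (fun i => T (z (σ (Fin.last n))) ≤ T (z i))]
      simp only [hσlast]
    calc ν (A j) = ν ((fun z : Fin (n+1) → Z => fun i => z (σ i)) ⁻¹' A (Fin.last n)) := by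
          rw [hpre]
      _ = Measure.map (fun z : Fin (n+1) → Z => fun i => z (σ i)) ν (A (Fin.last n)) :=
          (Measure.map_apply hmp (hAmeas (Fin.last n))).symm
      _ = ν (A (Fin.last n)) := by rw [hexch σ]
  -- Step 3: pointwise bound on the sum of indicators
  set k : ℕ := ⌊α * ((n:ℝ)+1)⌋₊ with hk
  have hpoint : ∀ z, ∑ j : Fin (n+1), (A j).indicator (fun _ => (1:ENNReal)) z
      ≤ (k : ENNReal) := by
    intro z
    have hsum_card : ∑ j : Fin (n+1), (A j).indicator (fun _ => (1:ENNReal)) z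
        = ((Finset.univ.filter (fun j : Fin (n+1) => z ∈ A j)).card : ENNReal) := by
      rw [Finset.card_filter]
      push_cast
      apply Finset.sum_congr rfl
      intro j _
      simp [Set.indicator_apply]
    rw [hsum_card]
    norm_cast
    set B := Finset.univ.filter (fun j : Fin (n+1) => z ∈ A j) with hB
    rcases B.eq_empty_or_nonempty with hBe | hBne
    · simp [hBe]
    · obtain ⟨j₀, hj₀B, hj₀min⟩ := Finset.exists_min_image B (fun j => T (z j)) hBne
      have hsub' : B ⊆ Finset.univ.filter (fun i : Fin (n+1) => T (z j₀) ≤ T (z i)) := by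
        intro j hj
        simp only [Finset.mem_filter, Finset.mem_univ, true_and]
        exact hj₀min j hj
      have hBle := Finset.card_le_card hsub'
      have hj₀A : z ∈ A j₀ := by
        simp only [hB, Finset.mem_filter] at hj₀B
        exact hj₀B.2
      simp only [hA, Set.mem_setOf_eq] at hj₀A
      have hrank : (Finset.univ.filter (fun i : Fin (n+1) => T (z j₀) ≤ T (z i))).card ≤ k :=
        Nat.le_floor hj₀A
      exact le_trans hBle hrank
  -- Step 4: averaging
  have hmul : ((n:ENNReal)+1) * ν (A (Fin.last n)) ≤ (k : ENNReal) := by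
    have hsum_eq : ∑ j : Fin (n+1), ν (A j) = ((n:ENNReal)+1) * ν (A (Fin.last n)) := by
      rw [Finset.sum_congr rfl (fun j _ => hAeq j)]
      simp [Finset.sum_const, nsmul_eq_mul]
    rw [← hsum_eq]
    calc ∑ j : Fin (n+1), ν (A j)
        = ∑ j : Fin (n+1), ∫⁻ z, (A j).indicator (fun _ => (1:ENNReal)) z ∂ν := by
          apply Finset.sum_congr rfl
          intro j _
          have := lintegral_indicator_one (μ := ν) (hAmeas j)
          rw [← this]
          rfl
      _ = ∫⁻ z, ∑ j : Fin (n+1), (A j).indicator (fun _ => (1:ENNReal)) z ∂ν :=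
          (lintegral_finset_sum _ (fun j _ =>
            (measurable_const.indicator (hAmeas j)))).symm
      _ ≤ ∫⁻ _, (k : ENNReal) ∂ν := lintegral_mono hpoint
      _ = (k : ENNReal) := by simp
  have hkle : (k : ENNReal) ≤ ((n:ENNReal)+1) * ENNReal.ofReal α := by
    calc (k : ENNReal) = ENNReal.ofReal (k : ℝ) := by simp
      _ ≤ ENNReal.ofReal (α * ((n:ℝ)+1)) :=
          ENNReal.ofReal_le_ofReal (Nat.floor_le (by positivity))
      _ = ENNReal.ofReal (((n:ℝ)+1) * α) := by ring_nf
      _ = ENNReal.ofReal ((n:ℝ)+1) * ENNReal.ofReal α :=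
          ENNReal.ofReal_mul (by positivity)
      _ = ((n:ENNReal)+1) * ENNReal.ofReal α := by
          congr 1
          rw [ENNReal.ofReal_add (by positivity) zero_le_one]
          simp
  have hfinal : ν (A (Fin.last n)) ≤ ENNReal.ofReal α := by
    have h := le_trans hmul hkle
    exact (ENNReal.mul_le_mul_iff_right (by simp) (by simp)).mp h
  exact le_trans (measure_mono hsub) hfinal
end

section
/- Let (Z, 𝒜) be a measurable space, μ a probability measure on Z, n ≥ 1, and α ∈ ℝ with 1/(n+1) ≤ α < 1. Let L : ℝ × Z → ℝ be jointly measurable with 0 ≤ L(λ, z) ≤ 1 for all (λ, z), such that for every z the map λ ↦ L(λ, z) is non-increasing and right-continuous, and such that there exist λ_min, λ_max ∈ ℝ with L(λ_max, z) = 0 and L(λ_min, z) = 1 for every z. For (z₁, …, z_n) ∈ Z^n define λ̂(z₁, …, z_n) = sInf{λ ∈ ℝ : (1/n)·Σ_{i=1}^{n} L(λ, z_i) ≤ α + (α − 1)/n}. Then, under the product measure μ^{⊗(n+1)} on Z^{n+1}, the expectation ∫ L(λ̂(z₁, …, z_n), z_{n+1}) d μ^{⊗(n+1)}(z) is at most α.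 -/
/-!
Let `λ*` be the least `λ` with `∑_{i ≤ n+1} L(λ, z_i) ≤ (n+1)α`, computed from the calibration
points *and* the test point; right-continuity makes the infimum attained. Since `L ≤ 1`, every `λ`
satisfying the calibration constraint satisfies this one, so `λ̂ ≥ λ*` and
`L(λ̂, z_{n+1}) ≤ L(λ*, z_{n+1})`. As `λ*` is a symmetric function of the i.i.d. sample, the
expected losses `E L(λ*, z_k)` agree for all `k`, and their sum is at most `(n+1)α` pointwise.
-/

open MeasureTheory Set

section Order

variable {α β : Type*} [ConditionallyCompleteLinearOrder α] [TopologicalSpace α] [OrderTopology α]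
  [LinearOrder β] [TopologicalSpace β] [OrderClosedTopology β]

theorem csInf_setOf_le_mem {g : α → β} {c : β} (hne : {x | g x ≤ c}.Nonempty)
    (hbdd : BddBelow {x | g x ≤ c})
    (hg : ContinuousWithinAt g (Ici (sInf {x | g x ≤ c})) (sInf {x | g x ≤ c})) :
    g (sInf {x | g x ≤ c}) ≤ c :=
  ContinuousWithinAt.closure_le (csInf_mem_closure hne hbdd)
    (hg.mono fun _ hx => csInf_le hbdd hx) continuousWithinAt_const fun _ hx => hx

theorem csInf_setOf_le_le_iff {g : α → β} {c : β} (hg : Antitone g)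
    (hrc : ∀ x, ContinuousWithinAt g (Ici x) x) (hne : {x | g x ≤ c}.Nonempty)
    (hbdd : BddBelow {x | g x ≤ c}) {t : α} :
    sInf {x | g x ≤ c} ≤ t ↔ g t ≤ c :=
  ⟨fun h => (hg h).trans (csInf_setOf_le_mem hne hbdd (hrc _)), fun h => csInf_le hbdd h⟩

end Order

section Exchangeability

variable {ι Z : Type*} [Fintype ι] [DecidableEq ι] [MeasurableSpace Z] (μ : Measure Z)

theorem integral_comp_eval_eq_of_perm_invariant {E : Type*} [NormedAddCommGroup E]
    [NormedSpace ℝ E] [SigmaFinite μ] (f : (ι → Z) → Z → E)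
    (hf : ∀ (σ : Equiv.Perm ι) z, f (z ∘ σ) = f z) (k j : ι) :
    ∫ z, f z (z k) ∂Measure.pi (fun _ => μ) = ∫ z, f z (z j) ∂Measure.pi (fun _ => μ) := by
  have hT := measurePreserving_piCongrLeft (fun _ : ι => μ) (Equiv.swap k j)
  rw [← hT.integral_comp']
  congr 1 with z
  have hTz : MeasurableEquiv.piCongrLeft (fun _ => Z) (Equiv.swap k j) z = z ∘ Equiv.swap k j := by
    ext i
    simpa using MeasurableEquiv.piCongrLeft_apply_apply (β := fun _ => Z) (Equiv.swap k j) z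
      (Equiv.swap k j i)
  simp [hTz, hf]

theorem card_mul_integral_comp_eval_le [IsProbabilityMeasure μ] (f : (ι → Z) → Z → ℝ)
    (hf : ∀ (σ : Equiv.Perm ι) z, f (z ∘ σ) = f z)
    (hint : ∀ k, Integrable (fun z => f z (z k)) (Measure.pi fun _ => μ)) {c : ℝ}
    (hsum : ∀ z, ∑ k, f z (z k) ≤ c) (j : ι) :
    Fintype.card ι * ∫ z, f z (z j) ∂Measure.pi (fun _ => μ) ≤ c :=
  calc Fintype.card ι * ∫ z, f z (z j) ∂Measure.pi (fun _ => μ)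
      = ∑ k, ∫ z, f z (z k) ∂Measure.pi (fun _ => μ) := by
        simp [integral_comp_eval_eq_of_perm_invariant μ f hf _ j]
    _ = ∫ z, ∑ k, f z (z k) ∂Measure.pi (fun _ => μ) :=
        (integral_finsetSum _ fun k _ => hint k).symm
    _ ≤ ∫ _, c ∂Measure.pi (fun _ => μ) :=
        integral_mono (integrable_finsetSum _ fun k _ => hint k) (integrable_const c) hsum
    _ = c := by simp

end Exchangeability

section OracleThreshold

variable {ι Z : Type*} [Fintype ι] {L : ℝ → Z → ℝ} {c : ℝ}

noncomputable def oracleThreshold (L : ℝ → Z → ℝ) (c : ℝ) (z : ι → Z) : ℝ :=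
  sInf {lam | ∑ i, L lam (z i) ≤ c}

theorem oracleThreshold_comp_perm (σ : Equiv.Perm ι) (z : ι → Z) :
    oracleThreshold L c (z ∘ σ) = oracleThreshold L c z := by
  simp only [oracleThreshold, Function.comp_apply]
  congr! 4 with lam
  exact Equiv.sum_comp σ fun i => L lam (z i)

theorem oracleThreshold_le_iff (hmono : ∀ x, Antitone fun lam => L lam x)
    (hrc : ∀ x lam, ContinuousWithinAt (fun l => L l x) (Ici lam) lam)
    {lamMin lamMax : ℝ} (hmax : ∀ x, L lamMax x = 0) (hmin : ∀ x, L lamMin x = 1)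
    (hc0 : 0 ≤ c) (hc : c < Fintype.card ι) (z : ι → Z) (t : ℝ) :
    oracleThreshold L c z ≤ t ↔ ∑ i, L t (z i) ≤ c := by
  have hanti : Antitone fun lam => ∑ i, L lam (z i) :=
    fun _ _ h => Finset.sum_le_sum fun i _ => hmono (z i) h
  refine csInf_setOf_le_le_iff hanti (fun lam => tendsto_finsetSum _ fun i _ => hrc (z i) lam)
    ⟨lamMax, by simpa [hmax] using hc0⟩ ⟨lamMin, fun lam hlam => ?_⟩
  by_contra! hlt
  have : (Fintype.card ι : ℝ) ≤ ∑ i, L lam (z i) := by simpa [hmin] using hanti hlt.le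
  exact (hc.trans_le this).not_ge hlam

theorem measurable_oracleThreshold [MeasurableSpace Z] (hL : ∀ lam, Measurable (L lam))
    (hle : ∀ (z : ι → Z) t, oracleThreshold L c z ≤ t ↔ ∑ i, L t (z i) ≤ c) :
    Measurable (oracleThreshold (ι := ι) L c) := by
  refine measurable_of_Iic fun t => ?_
  have : oracleThreshold L c ⁻¹' Iic t = {z : ι → Z | ∑ i, L t (z i) ≤ c} := by
    ext z
    exact hle z t
  rw [this]
  exact measurableSet_le (Finset.measurable_sum _ fun i _ => (hL t).comp (measurable_pi_apply i))
    measurable_const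

end OracleThreshold

theorem sum_le_of_mean_castSucc_le {n : ℕ} (hn : (0 : ℝ) < n) {α : ℝ} {a : Fin (n + 1) → ℝ}
    (ha : a (Fin.last n) ≤ 1) (h : 1 / (n : ℝ) * ∑ i : Fin n, a i.castSucc ≤ α + (α - 1) / n) :
    ∑ i, a i ≤ ((n : ℝ) + 1) * α := by
  rw [Fin.sum_univ_castSucc]
  have : ∑ i : Fin n, a i.castSucc ≤ n * α + α - 1 := by
    rw [div_mul_eq_mul_div, one_mul, div_le_iff₀ hn] at h
    field_simp at h
    linarith
  linarith

theorem add_sub_one_div_nonneg {n : ℕ} (hn : (0 : ℝ) < n) {α : ℝ} (hα : 1 ≤ ((n : ℝ) + 1) * α) :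
    0 ≤ α + (α - 1) / n := by
  rw [show α + (α - 1) / n = (((n : ℝ) + 1) * α - 1) / n by field_simp; ring]
  exact div_nonneg (sub_nonneg.2 hα) hn.le

open MeasureTheory in
theorem crc_general_monotone_loss_general {Z : Type*} [MeasurableSpace Z]
    (μ : Measure Z) [IsProbabilityMeasure μ] (n : ℕ)
    (α : ℝ) (hα1 : 1 / ((n : ℝ) + 1) ≤ α) (hα2 : α < 1)
    (L : ℝ → Z → ℝ) (hLmeas : Measurable fun q : ℝ × Z => L q.1 q.2)
    (hL0 : ∀ lam z, 0 ≤ L lam z) (hL1 : ∀ lam z, L lam z ≤ 1)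
    (hmono : ∀ z, Antitone fun lam => L lam z)
    (hrc : ∀ z lam, ContinuousWithinAt (fun l => L l z) (Set.Ici lam) lam)
    (lamMin lamMax : ℝ)
    (hmax : ∀ z, L lamMax z = 0) (hmin : ∀ z, L lamMin z = 1) :
    ∫ z : Fin (n + 1) → Z,
        L (sInf {lam : ℝ |
            (1 / (n : ℝ)) * ∑ i : Fin n, L lam (z i.castSucc) ≤
              α + (α - 1) / (n : ℝ)})
          (z (Fin.last n))
      ∂(Measure.pi fun _ : Fin (n + 1) => μ) ≤ α := by
  have hn1 : (0 : ℝ) < n + 1 := by positivity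
  have hα : 1 ≤ ((n : ℝ) + 1) * α := by rwa [div_le_iff₀' hn1] at hα1
  have hn : (0 : ℝ) < n := by
    rcases n.eq_zero_or_pos with rfl | hn
    · norm_num at hα; linarith
    · exact_mod_cast hn
  have hc : ((n : ℝ) + 1) * α < Fintype.card (Fin (n + 1)) := by
    simpa using (mul_lt_iff_lt_one_right hn1).2 hα2
  have hle := oracleThreshold_le_iff hmono hrc hmax hmin (by linarith) hc
  set lamStar := oracleThreshold (ι := Fin (n + 1)) L (((n : ℝ) + 1) * α)
  have hmeas : Measurable lamStar :=
    measurable_oracleThreshold (fun lam => hLmeas.comp measurable_prodMk_left) hle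
  have hint : ∀ k, Integrable (fun z => L (lamStar z) (z k)) (Measure.pi fun _ => μ) :=
    fun k => .of_bound (hLmeas.comp (hmeas.prodMk (measurable_pi_apply k))).aestronglyMeasurable 1
      (ae_of_all _ fun z => abs_le.2 ⟨by linarith [hL0 (lamStar z) (z k)], hL1 _ _⟩)
  have hdom : ∀ z : Fin (n + 1) → Z, lamStar z ≤ sInf {lam : ℝ |
      (1 / (n : ℝ)) * ∑ i : Fin n, L lam (z i.castSucc) ≤ α + (α - 1) / (n : ℝ)} :=
    fun z => le_csInf ⟨lamMax, by simpa [hmax] using add_sub_one_div_nonneg hn hα⟩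
      fun lam hlam => (hle z lam).2 (sum_le_of_mean_castSucc_le hn (hL1 _ _) hlam)
  have havg := card_mul_integral_comp_eval_le μ (fun z => L (lamStar z))
    (fun σ z => by simp only [lamStar, oracleThreshold_comp_perm]) hint
    (fun z => (hle z (lamStar z)).1 le_rfl) (Fin.last n)
  calc _ ≤ ∫ z, L (lamStar z) (z (Fin.last n)) ∂Measure.pi fun _ => μ :=
        integral_mono_of_nonneg (ae_of_all _ fun _ => hL0 _ _) (hint _)
          (ae_of_all _ fun z => hmono _ (hdom z))
    _ ≤ α := by
        rw [Fintype.card_fin, Nat.cast_add_one] at havg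
        exact le_of_mul_le_mul_left havg hn1

open MeasureTheory in
/-- Conformal risk control for general bounded monotone losses: for a loss
`L(λ, z) ∈ [0,1]`, non-increasing and right-continuous in `λ`, attaining `0`
at some `λ_max` and `1` at some `λ_min`, and the calibrated threshold
`λ̂ = inf {λ : (1/n) Σ_i L(λ, z_i) ≤ α + (α−1)/n}`, the expected loss of `λ̂`
on a fresh i.i.d. sample is at most `α`. -/
theorem crc_general_monotone_loss {Z : Type*} [MeasurableSpace Z]
    (μ : Measure Z) [IsProbabilityMeasure μ] (n : ℕ) (hn : 1 ≤ n)
    (α : ℝ) (hα1 : 1 / ((n : ℝ) + 1) ≤ α) (hα2 : α < 1)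
    (L : ℝ → Z → ℝ) (hLmeas : Measurable fun q : ℝ × Z => L q.1 q.2)
    (hL0 : ∀ lam z, 0 ≤ L lam z) (hL1 : ∀ lam z, L lam z ≤ 1)
    (hmono : ∀ z, Antitone fun lam => L lam z)
    (hrc : ∀ z lam, ContinuousWithinAt (fun l => L l z) (Set.Ici lam) lam)
    (lamMin lamMax : ℝ)
    (hmax : ∀ z, L lamMax z = 0) (hmin : ∀ z, L lamMin z = 1) :
    ∫ z : Fin (n + 1) → Z,
        L (sInf {lam : ℝ |
            (1 / (n : ℝ)) * ∑ i : Fin n, L lam (z i.castSucc) ≤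
              α + (α - 1) / (n : ℝ)})
          (z (Fin.last n))
      ∂(Measure.pi fun _ : Fin (n + 1) => μ) ≤ α :=
  crc_general_monotone_loss_general μ n α hα1 hα2 L hLmeas hL0 hL1 hmono hrc lamMin lamMax hmax hmin
end
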